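/- For a nonnegative integer n and a complex number b (avoiding zero denominators), ∑_{k=0}^n [(-n)_k (3b/2)_k ((1+3b)/2)_k / (k! (3b)_k (b-(n-2)/3)_k)] (4/3)^k equals (1/3)_{n/3} (2/3)_{n/3} / ((1/3-b)_{n/3} (2/3+b)_{n/3}) if 3 divides n, and 0 otherwise. -/

import Mathlib

open Finset

noncomputable def poch (x : ℂ) (m : ℕ) : ℂ := ∏ j ∈ Finset.range m, (x + (j : ℂ))

noncomputable def qpoch (x q : ℂ) (m : ℕ) : ℂ := ∏ i ∈ Finset.range m, (1 - x * q ^ i)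

/-!
Write `t n k` for the `k`-th summand and `S n` for the sum. Zeilberger's algorithm yields a
recurrence of order one in steps of three,
`(n + 1 - 3b)(n + 2 + 3b) S (n + 3) = (n + 1)(n + 2) S n`,
proved by creative telescoping: `n + 3` times the corresponding combination of `t (n + 3) k` and
`t n k` equals `G (k + 1) - G k` with `G k = -k (k - 1 + 3b)(n + 1 - 3b) t (n + 3) k`, and summing
over `k` leaves only a boundary term that cancels the top summand of `S (n + 3)`. Each Pochhammer
symbol on the right-hand side gains one factor when `n` grows by three, so it obeys the same
recurrence, and `n = 0, 1, 2` are checked directly.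
-/

lemma poch_succ (x : ℂ) (k : ℕ) : poch x (k + 1) = poch x k * (x + k) :=
  prod_range_succ _ _

lemma poch_add (x : ℂ) (j k : ℕ) : poch x (j + k) = poch x j * poch (x + j) k := by
  simp only [poch, prod_range_add, Nat.cast_add, add_assoc]

lemma poch_succ' (x : ℂ) (k : ℕ) : poch x (k + 1) = x * poch (x + 1) k := by
  rw [add_comm, poch_add]
  simp [poch]

lemma poch_one (x : ℂ) : poch x 1 = x := by
  simp [poch]

lemma poch_three (x : ℂ) : poch x 3 = x * (x + 1) * (x + 2) := by
  simp [poch, prod_range_succ]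

lemma poch_neg_natCast_eq_zero {n k : ℕ} (h : n < k) : poch (-(n : ℂ)) k = 0 :=
  prod_eq_zero (mem_range.2 h) (by simp)

lemma poch_succ_ne_zero_iff {x : ℂ} {k : ℕ} :
    poch x (k + 1) ≠ 0 ↔ poch x k ≠ 0 ∧ x + k ≠ 0 := by
  rw [poch_succ, mul_ne_zero_iff]

noncomputable def summand (n : ℕ) (b : ℂ) (k : ℕ) : ℂ :=
  poch (-(n:ℂ)) k * poch (3*b/2) k * poch ((1+3*b)/2) k * (4/3)^k /
    ((Nat.factorial k : ℂ) * poch (3*b) k * poch (b - ((n:ℂ)-2)/3) k)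

noncomputable def curiousSum (n : ℕ) (b : ℂ) : ℂ := ∑ k ∈ range (n + 1), summand n b k

noncomputable def closedForm (n : ℕ) (b : ℂ) : ℂ :=
  if 3 ∣ n then
    poch (1/3) (n/3) * poch (2/3) (n/3) / (poch (1/3 - b) (n/3) * poch (2/3 + b) (n/3))
  else 0

def DenomsNeZero (n : ℕ) (b : ℂ) : Prop :=
  ∀ k ≤ n, poch (3*b) k ≠ 0 ∧ poch (b - ((n:ℂ)-2)/3) k ≠ 0

lemma summand_eq_zero_of_lt {n k : ℕ} (b : ℂ) (h : n < k) : summand n b k = 0 := by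
  simp [summand, poch_neg_natCast_eq_zero h]

lemma summand_succ (n : ℕ) (b : ℂ) (k : ℕ) :
    summand n b (k + 1) = summand n b k *
      ((k - n) * (3*b/2 + k) * ((1 + 3*b)/2 + k) * (4/3) /
        ((k + 1) * (3*b + k) * (b - ((n:ℂ)-2)/3 + k))) := by
  rw [summand, summand, div_mul_div_comm]
  simp only [poch_succ, pow_succ, Nat.factorial_succ, Nat.cast_mul, Nat.cast_succ]
  congr 1 <;> ring

lemma poch_neg_natCast_eq_mul (m k : ℕ) :
    poch (-(m : ℂ)) k = poch (-((m : ℂ) + 3)) k *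
      (-((k - (m : ℂ) - 3) * (k - (m : ℂ) - 2) * (k - (m : ℂ) - 1)) /
        (((m : ℂ) + 1) * ((m : ℂ) + 2) * ((m : ℂ) + 3))) := by
  have h := poch_add (-((m : ℂ) + 3)) 3 k
  rw [add_comm 3 k, poch_add, poch_three, poch_three,
    show -((m : ℂ) + 3) + (3:ℕ) = -m by push_cast; ring] at h
  have : ((m : ℂ) + 1) * ((m : ℂ) + 2) * ((m : ℂ) + 3) ≠ 0 := by
    exact_mod_cast (by positivity : (m + 1) * (m + 2) * (m + 3) ≠ 0)
  rw [mul_div_assoc', eq_div_iff this]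
  linear_combination h

lemma poch_add_one_eq_div {y : ℂ} (hy : y ≠ 0) (k : ℕ) :
    poch (y + 1) k = poch y k * (y + k) / y :=
  eq_div_of_mul_eq hy (by rw [mul_comm, ← poch_succ', poch_succ])

lemma sub_natCast_add_three_sub_two_div_three (m : ℕ) (b : ℂ) :
    b - (((m + 3 : ℕ) : ℂ) - 2) / 3 = b - ((m : ℂ) + 1) / 3 := by
  push_cast
  ring

lemma summand_eq_summand_add_three_mul (m : ℕ) (b : ℂ) (k : ℕ)
    (hy : b - ((m : ℂ) + 1) / 3 ≠ 0) :
    summand m b k = summand (m + 3) b k *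
      (-((k - (m : ℂ) - 3) * (k - (m : ℂ) - 2) * (k - (m : ℂ) - 1)) /
          (((m : ℂ) + 1) * ((m : ℂ) + 2) * ((m : ℂ) + 3)) *
        ((b - ((m : ℂ) + 1) / 3) / (b - ((m : ℂ) + 1) / 3 + k))) := by
  have hF := poch_add_one_eq_div hy k
  rw [show b - ((m : ℂ) + 1) / 3 + 1 = b - ((m : ℂ) - 2) / 3 by ring] at hF
  rw [summand, summand, poch_neg_natCast_eq_mul, hF, sub_natCast_add_three_sub_two_div_three,
    show ((m + 3 : ℕ) : ℂ) = m + 3 by push_cast; ring]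
  simp only [div_eq_mul_inv, mul_inv, inv_inv]
  ring

noncomputable def certificate (m : ℕ) (b : ℂ) (k : ℕ) : ℂ :=
  -(k : ℂ) * (k - 1 + 3*b) * (m + 1 - 3*b) * summand (m + 3) b k

lemma summand_recurrence_eq_certificate_sub (m : ℕ) (b : ℂ) {k : ℕ} (h3b : 3*b + k ≠ 0)
    (hy : b - ((m : ℂ) + 1) / 3 ≠ 0) (hyk : b - ((m : ℂ) + 1) / 3 + k ≠ 0) :
    ((m : ℂ) + 3) * (((m : ℂ) + 1 - 3*b) * ((m : ℂ) + 2 + 3*b)) * summand (m + 3) b k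
      - ((m : ℂ) + 1) * ((m : ℂ) + 2) * ((m : ℂ) + 3) * summand m b k
      = certificate m b (k + 1) - certificate m b k := by
  rw [certificate, certificate, summand_succ, summand_eq_summand_add_three_mul m b k hy,
    sub_natCast_add_three_sub_two_div_three]
  push_cast
  have : (m : ℂ) + 2 ≠ 0 := by exact_mod_cast (by omega : m + 2 ≠ 0)
  have : (m : ℂ) + 3 ≠ 0 := by exact_mod_cast (by omega : m + 3 ≠ 0)
  have : 3*b - ((m : ℂ) + 1) + 3*k ≠ 0 := by
    contrapose! hyk
    linear_combination hyk / 3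
  field_simp
  ring

lemma DenomsNeZero.of_add_three {m : ℕ} {b : ℂ} (h : DenomsNeZero (m + 3) b) :
    DenomsNeZero m b := by
  intro k hk
  refine ⟨(h k (by omega)).1, ?_⟩
  have h' := (h (k + 1) (by omega)).2
  rw [poch_succ', sub_natCast_add_three_sub_two_div_three,
    show b - ((m : ℂ) + 1) / 3 + 1 = b - ((m : ℂ) - 2) / 3 by ring] at h'
  exact right_ne_zero_of_mul h'

lemma curiousSum_eq_sum_range_add_three (m : ℕ) (b : ℂ) :
    curiousSum m b = ∑ k ∈ range (m + 3), summand m b k := by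
  refine sum_subset (range_subset_range.2 (by omega)) fun k hk hk' => ?_
  exact summand_eq_zero_of_lt b (by simp only [mem_range] at hk hk'; omega)

lemma mul_curiousSum_add_three {m : ℕ} {b : ℂ} (hden : DenomsNeZero (m + 3) b) :
    ((m : ℂ) + 1 - 3*b) * ((m : ℂ) + 2 + 3*b) * curiousSum (m + 3) b
      = ((m : ℂ) + 1) * ((m : ℂ) + 2) * curiousSum m b := by
  have hstep : ∀ k ∈ range (m + 3),
      ((m : ℂ) + 3) * (((m : ℂ) + 1 - 3*b) * ((m : ℂ) + 2 + 3*b)) * summand (m + 3) b k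
        - ((m : ℂ) + 1) * ((m : ℂ) + 2) * ((m : ℂ) + 3) * summand m b k
        = certificate m b (k + 1) - certificate m b k := by
    intro k hk
    obtain ⟨hE, hF⟩ := hden (k + 1) (by simp only [mem_range] at hk; omega)
    rw [sub_natCast_add_three_sub_two_div_three] at hF
    refine summand_recurrence_eq_certificate_sub m b (poch_succ_ne_zero_iff.1 hE).2 ?_
      (poch_succ_ne_zero_iff.1 hF).2
    rw [poch_succ'] at hF
    exact left_ne_zero_of_mul hF
  have htel := sum_range_sub (certificate m b) (m + 3)
  rw [← sum_congr rfl hstep, sum_sub_distrib, ← mul_sum, ← mul_sum,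
    ← curiousSum_eq_sum_range_add_three] at htel
  have hm : (m : ℂ) + 3 ≠ 0 := by exact_mod_cast (by omega : m + 3 ≠ 0)
  refine mul_left_cancel₀ hm ?_
  rw [curiousSum, sum_range_succ]
  -- `certificate m b (m + 3)` cancels the top summand of `curiousSum (m + 3)`.
  simp only [certificate, Nat.cast_zero, neg_zero, zero_mul] at htel
  push_cast at htel
  linear_combination htel

lemma closedForm_add_three (m : ℕ) (b : ℂ) :
    closedForm (m + 3) b = ((m : ℂ) + 1) * ((m : ℂ) + 2) /
      (((m : ℂ) + 1 - 3*b) * ((m : ℂ) + 2 + 3*b)) * closedForm m b := by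
  unfold closedForm
  by_cases h : 3 ∣ m
  · rw [if_pos (by omega), if_pos h, show (m + 3)/3 = m/3 + 1 by omega]
    simp only [poch_succ, Nat.cast_div_charZero h, Nat.cast_ofNat]
    rw [show (1 : ℂ) / 3 - b + m/3 = ((m : ℂ) + 1 - 3*b)/3 by ring,
      show (2 : ℂ) / 3 + b + m/3 = ((m : ℂ) + 2 + 3*b)/3 by ring]
    simp only [div_eq_mul_inv, mul_inv, inv_inv]
    ring
  · rw [if_neg (by omega), if_neg h, mul_zero]

lemma curiousSum_add_three {m : ℕ} {b : ℂ} (hden : DenomsNeZero (m + 3) b) :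
    curiousSum (m + 3) b = ((m : ℂ) + 1) * ((m : ℂ) + 2) /
      (((m : ℂ) + 1 - 3*b) * ((m : ℂ) + 2 + 3*b)) * curiousSum m b := by
  have h1 : (m : ℂ) + 1 - 3*b ≠ 0 := by
    have h := (hden 1 (by omega)).2
    rw [poch_one] at h
    push_cast at h
    exact fun h0 => h (by linear_combination -h0/3)
  have h2 : (m : ℂ) + 2 + 3*b ≠ 0 := by
    have h := (poch_succ_ne_zero_iff.1 (hden (m + 2 + 1) le_rfl).1).2
    push_cast at h
    exact fun h0 => h (by linear_combination h0)
  rw [div_mul_eq_mul_div, eq_div_iff (mul_ne_zero h1 h2), mul_comm,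
    mul_curiousSum_add_three hden]

lemma curiousSum_eq_closedForm_of_lt_three {n : ℕ} {b : ℂ} (hn : n < 3)
    (hden : DenomsNeZero n b) :
    curiousSum n b = closedForm n b := by
  interval_cases n
  · simp [curiousSum, closedForm, summand, poch]
  · have h := hden 1 le_rfl
    norm_num [poch] at h
    obtain ⟨hb, hb'⟩ := h
    have : 3*b + 1 ≠ 0 := fun h => hb' (by linear_combination h/3)
    norm_num [curiousSum, closedForm, summand, poch, sum_range_succ]
    field_simp
    ring
  · have h := hden 2 le_rfl
    norm_num [poch, prod_range_succ] at h
    obtain ⟨⟨hb, hb'⟩, -, hb''⟩ := h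
    norm_num [curiousSum, closedForm, summand, poch, sum_range_succ, prod_range_succ]
    field_simp
    ring

theorem stmt1_general (n : ℕ) (b : ℂ)
    (hden : ∀ k ≤ n, poch (3*b) k ≠ 0 ∧ poch (b - ((n:ℂ)-2)/3) k ≠ 0) :
    ∑ k ∈ Finset.range (n+1),
      poch (-(n:ℂ)) k * poch (3*b/2) k * poch ((1+3*b)/2) k * (4/3)^k /
        ((Nat.factorial k : ℂ) * poch (3*b) k * poch (b - ((n:ℂ)-2)/3) k)
    = if 3 ∣ n then
        poch (1/3) (n/3) * poch (2/3) (n/3) / (poch (1/3 - b) (n/3) * poch (2/3 + b) (n/3))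
      else 0 := by
  change curiousSum n b = closedForm n b
  induction n using Nat.strong_induction_on with
  | _ n ih =>
    rcases lt_or_ge n 3 with hn | hn
    · exact curiousSum_eq_closedForm_of_lt_three hn hden
    · obtain ⟨m, rfl⟩ := Nat.exists_eq_add_of_le' hn
      rw [curiousSum_add_three hden, closedForm_add_three,
        ih m (by omega) (DenomsNeZero.of_add_three hden)]

theorem stmt1 (n : ℕ) (b : ℂ)
    (hden : ∀ k ≤ n, poch (3*b) k ≠ 0 ∧ poch (b - ((n:ℂ)-2)/3) k ≠ 0)
    (hrhs : poch (1/3 - b) (n/3) ≠ 0 ∧ poch (2/3 + b) (n/3) ≠ 0) :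
    ∑ k ∈ Finset.range (n+1),
      poch (-(n:ℂ)) k * poch (3*b/2) k * poch ((1+3*b)/2) k * (4/3)^k /
        ((Nat.factorial k : ℂ) * poch (3*b) k * poch (b - ((n:ℂ)-2)/3) k)
    = if 3 ∣ n then
        poch (1/3) (n/3) * poch (2/3) (n/3) / (poch (1/3 - b) (n/3) * poch (2/3 + b) (n/3))
      else 0 :=
  stmt1_general n b hden
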